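/- Suppose φ, ψ : 𝓕 → 𝓔 are additive mappings such that ⟨φ(z), ψ(w)⟩ = 0 and a·⟨φ(z), φ(w)⟩·a* = (1−a)·⟨ψ(z), ψ(w)⟩·(1−a)* for all z, w ∈ 𝓕. If f : 𝓔 → 𝓖 is an even orthogonally a-Jensen mapping (f(−x) = f(x) for all x) with f(0) = 0, then f(φ(x) + φ(y)) + f(φ(x) − φ(y)) = 2 f(φ(x)) + 2 f(φ(y)) and f(ψ(x) + ψ(y)) + f(ψ(x) − ψ(y)) = 2 f(ψ(x)) + 2 f(ψ(y)) for all x, y ∈ 𝓕; that is, f is quadratic on φ(𝓕) and on ψ(𝓕). -/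

import Mathlib

open scoped RightActions

/-- The Hilbert C⋆-module class as it stood in Mathlib (December 2024): a right `A`-module
structure (action of `Aᵐᵒᵖ`) with an `A`-valued inner product. -/
class RightCStarModule (A : outParam <| Type*) (E : Type*) [NonUnitalSemiring A] [StarRing A]
    [Module ℂ A] [AddCommGroup E] [Module ℂ E] [PartialOrder A] [SMul Aᵐᵒᵖ E] [Norm A] [Norm E]
    extends Inner A E where
  inner_add_right {x} {y} {z} : inner x (y + z) = inner x y + inner x z
  inner_self_nonneg {x} : 0 ≤ inner x x
  inner_self {x} : inner x x = 0 ↔ x = 0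
  inner_op_smul_right {a : A} {x y : E} : inner x (y <• a) = inner x y * a
  inner_smul_right_complex {z : ℂ} {x} {y} : inner x (z • y) = z • inner x y
  star_inner x y : star (inner x y) = inner y x
  norm_eq_sqrt_norm_inner_self x : ‖x‖ = √‖inner x x‖

variable {A : Type*} [CStarAlgebra A] [PartialOrder A] [StarOrderedRing A]
variable {E : Type*} [NormedAddCommGroup E] [Module ℂ E] [Module Aᵐᵒᵖ E] [RightCStarModule A E]
variable {F : Type*} [NormedAddCommGroup F] [Module ℂ F] [Module Aᵐᵒᵖ F] [RightCStarModule A F]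
variable {G : Type*} [NormedAddCommGroup G] [Module ℂ G] [Module Aᵐᵒᵖ G] [RightCStarModule A G]

/-- A mapping `f : E → G` between inner product `A`-modules is *orthogonally `a`-Jensen* if
`⟪x, y⟫ = 0` implies `f (a·x + (1-a)·y) = a·f x + (1-a)·f y` (module actions written as right
actions `<•`, since `E`, `G` are right `A`-modules). -/
def OrthAJensen (a : A) (f : E → G) : Prop :=
  ∀ x y : E, inner (𝕜 := A) x y = 0 →
    f (x <• a + y <• (1 - a)) = f x <• a + f y <• (1 - a)

/-!
Putting `0` in one slot of the Jensen equation shows that `f` commutes with the right actions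
of `a` and `1 - a`; as both are invertible, `f` is orthogonally additive. Rescaling `ψ` by
`star (⅟a * (1 - a))` keeps it orthogonal to `φ` and makes its inner products equal to those
of `φ`. Then `φ s + ψ s ⊥ φ t - ψ t`, so additivity on orthogonal pairs and evenness give
`f (φ (s + t)) + f (ψ (s - t)) = f (φ s) + f (ψ s) + f (φ t) + f (ψ t)`. Taking `t = ±s`
yields `f ∘ φ = f ∘ ψ` on `2 • F = F`, after which the same identity is the parallelogram law.
-/

open scoped InnerProductSpace

section

variable {R M : Type*} [NonUnitalRing R] [StarRing R] [Module ℂ R] [PartialOrder R] [Norm R]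
  [AddCommGroup M] [Module ℂ M] [SMul Rᵐᵒᵖ M] [Norm M] [RightCStarModule R M]

namespace RightCStarModule

def innerAddHom (x : M) : M →+ R :=
  AddMonoidHom.mk' (inner R x) fun _ _ => inner_add_right

theorem inner_zero_right (x : M) : ⟪x, 0⟫_R = 0 := map_zero (innerAddHom x)

theorem inner_neg_right (x y : M) : ⟪x, -y⟫_R = -⟪x, y⟫_R := map_neg (innerAddHom x) y

theorem inner_sub_right (x y z : M) : ⟪x, y - z⟫_R = ⟪x, y⟫_R - ⟪x, z⟫_R :=
  map_sub (innerAddHom x) y z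

theorem inner_zero_left (x : M) : ⟪0, x⟫_R = 0 := by
  rw [← star_inner, inner_zero_right, star_zero]

theorem inner_add_left (x y z : M) : ⟪x + y, z⟫_R = ⟪x, z⟫_R + ⟪y, z⟫_R := by
  rw [← star_inner, inner_add_right, star_add, star_inner, star_inner]

theorem inner_op_smul_left (r : R) (x y : M) : ⟪x <• r, y⟫_R = star r * ⟪x, y⟫_R := by
  rw [← star_inner, inner_op_smul_right, star_mul, star_inner]

theorem inner_eq_zero_comm {x y : M} : ⟪x, y⟫_R = 0 ↔ ⟪y, x⟫_R = 0 := by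
  rw [← star_inner, star_eq_zero]

end RightCStarModule

variable {N X : Type*} [AddCommMonoid N] [AddCommGroup X] {f : M → N}

theorem apply_map_add_add_apply_map_sub
    (hf : ∀ x y : M, ⟪x, y⟫_R = 0 → f (x + y) = f x + f y) (heven : ∀ x, f (-x) = f x)
    (φ ψ : X →+ M) (horth : ∀ z w, ⟪φ z, ψ w⟫_R = 0)
    (hgram : ∀ z w, ⟪ψ z, ψ w⟫_R = ⟪φ z, φ w⟫_R) (s t : X) :
    f (φ (s + t)) + f (ψ (s - t)) = f (φ s) + f (ψ s) + (f (φ t) + f (ψ t)) := by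
  have hdiag : ⟪φ s + ψ s, φ t - ψ t⟫_R = 0 := by
    rw [RightCStarModule.inner_add_left, RightCStarModule.inner_sub_right,
      RightCStarModule.inner_sub_right, horth, RightCStarModule.inner_eq_zero_comm.1 (horth t s),
      hgram]
    abel
  have hneg : ⟪φ t, -ψ t⟫_R = 0 := by rw [RightCStarModule.inner_neg_right, horth, neg_zero]
  calc f (φ (s + t)) + f (ψ (s - t))
      = f ((φ s + ψ s) + (φ t + -ψ t)) := by
        rw [← hf _ _ (horth _ _), map_add, map_sub]
        congr 1
        abel
    _ = f (φ s) + f (ψ s) + (f (φ t) + f (ψ t)) := by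
        rw [← sub_eq_add_neg, hf _ _ hdiag, hf _ _ (horth s s), sub_eq_add_neg, hf _ _ hneg,
          heven]

theorem apply_map_eq_apply_map_of_inner_eq
    (hf : ∀ x y : M, ⟪x, y⟫_R = 0 → f (x + y) = f x + f y) (heven : ∀ x, f (-x) = f x)
    (hf0 : f 0 = 0) (hX : ∀ u : X, ∃ v, v + v = u)
    (φ ψ : X →+ M) (horth : ∀ z w, ⟪φ z, ψ w⟫_R = 0)
    (hgram : ∀ z w, ⟪ψ z, ψ w⟫_R = ⟪φ z, φ w⟫_R) (u : X) :
    f (φ u) = f (ψ u) := by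
  obtain ⟨v, rfl⟩ := hX u
  have hsum := apply_map_add_add_apply_map_sub hf heven φ ψ horth hgram v v
  have hdiff := apply_map_add_add_apply_map_sub hf heven φ ψ horth hgram v (-v)
  rw [sub_self, map_zero, hf0, add_zero] at hsum
  rw [add_neg_cancel, sub_neg_eq_add, map_zero, hf0, zero_add, map_neg, map_neg, heven,
    heven] at hdiff
  rw [hsum, hdiff]

theorem map_parallelogram_of_inner_eq
    (hf : ∀ x y : M, ⟪x, y⟫_R = 0 → f (x + y) = f x + f y) (heven : ∀ x, f (-x) = f x)
    (hf0 : f 0 = 0) (hX : ∀ u : X, ∃ v, v + v = u)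
    (φ ψ : X →+ M) (horth : ∀ z w, ⟪φ z, ψ w⟫_R = 0)
    (hgram : ∀ z w, ⟪ψ z, ψ w⟫_R = ⟪φ z, φ w⟫_R) (x y : X) :
    f (φ x + φ y) + f (φ x - φ y) = 2 • f (φ x) + 2 • f (φ y) := by
  have hφψ := apply_map_eq_apply_map_of_inner_eq hf heven hf0 hX φ ψ horth hgram
  have h := apply_map_add_add_apply_map_sub hf heven φ ψ horth hgram x y
  rw [← hφψ, ← hφψ, ← hφψ, map_add, map_sub] at h
  rw [h, two_smul, two_smul]

end

theorem map_parallelogram_of_conj_inner_eq {R M N X : Type*} [Ring R] [StarRing R] [Module ℂ R]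
    [PartialOrder R] [Norm R] [AddCommGroup M] [Module ℂ M] [DistribSMul Rᵐᵒᵖ M] [Norm M]
    [RightCStarModule R M] [AddCommMonoid N] [AddCommGroup X] {f : M → N}
    (hf : ∀ x y : M, ⟪x, y⟫_R = 0 → f (x + y) = f x + f y) (heven : ∀ x, f (-x) = f x)
    (hf0 : f 0 = 0) (hX : ∀ u : X, ∃ v, v + v = u)
    (φ ψ : X →+ M) (horth : ∀ z w, ⟪φ z, ψ w⟫_R = 0) (c d : R) [Invertible c]
    (hgram : ∀ z w, c * ⟪φ z, φ w⟫_R * star c = d * ⟪ψ z, ψ w⟫_R * star d) (x y : X) :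
    f (φ x + φ y) + f (φ x - φ y) = 2 • f (φ x) + 2 • f (φ y) := by
  let ψ' : X →+ M := (DistribSMul.toAddMonoidHom M (MulOpposite.op (star (⅟c * d)))).comp ψ
  refine map_parallelogram_of_inner_eq hf heven hf0 hX φ ψ' (fun z w => ?_) (fun z w => ?_) x y
  · change ⟪φ z, ψ w <• star (⅟c * d)⟫_R = 0
    rw [RightCStarModule.inner_op_smul_right, horth, zero_mul]
  · change ⟪ψ z <• star (⅟c * d), ψ w <• star (⅟c * d)⟫_R = ⟪φ z, φ w⟫_R
    rw [RightCStarModule.inner_op_smul_left, RightCStarModule.inner_op_smul_right, star_star]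
    calc ⅟c * d * (⟪ψ z, ψ w⟫_R * star (⅟c * d))
        = ⅟c * (d * ⟪ψ z, ψ w⟫_R * star d) * star (⅟c) := by
          rw [star_mul]; simp only [mul_assoc]
      _ = ⟪φ z, φ w⟫_R := by
          rw [← hgram]
          simp only [mul_assoc]
          rw [← star_mul, invOf_mul_self, star_one, mul_one, invOf_mul_cancel_left]

namespace OrthAJensen

variable {R M N : Type*} [CStarAlgebra R] [PartialOrder R]
  [NormedAddCommGroup M] [Module ℂ M] [Module Rᵐᵒᵖ M] [RightCStarModule R M]
  [NormedAddCommGroup N] [Module Rᵐᵒᵖ N] {a : R} {f : M → N}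

theorem map_op_smul (hf : OrthAJensen a f) (hf0 : f 0 = 0) (x : M) : f (x <• a) = f x <• a := by
  simpa [hf0] using hf x 0 (RightCStarModule.inner_zero_right x)

theorem map_op_smul_one_sub (hf : OrthAJensen a f) (hf0 : f 0 = 0) (y : M) :
    f (y <• (1 - a)) = f y <• (1 - a) := by
  simpa [hf0] using hf 0 y (RightCStarModule.inner_zero_left y)

theorem map_add_of_inner_eq_zero (hf : OrthAJensen a f) (hf0 : f 0 = 0) [Invertible a]
    [Invertible (1 - a)] {x y : M} (hxy : ⟪x, y⟫_R = 0) : f (x + y) = f x + f y := by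
  have horth : ⟪x <• ⅟a, y <• ⅟(1 - a)⟫_R = 0 := by
    rw [RightCStarModule.inner_op_smul_left, RightCStarModule.inner_op_smul_right, hxy,
      zero_mul, mul_zero]
  have h := hf _ _ horth
  rwa [← hf.map_op_smul hf0, ← hf.map_op_smul_one_sub hf0, op_smul_op_smul, op_smul_op_smul,
    invOf_mul_self, invOf_mul_self, MulOpposite.op_one, one_smul, one_smul] at h

end OrthAJensen

/-- First part of Proposition 2.5: an even orthogonally `a`-Jensen mapping with `f 0 = 0`
is quadratic on `φ(F)` and on `ψ(F)`. -/
theorem even_quadratic_on_ranges (a : A) [Invertible a] [Invertible (1 - a)] (φ ψ : F → E)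
    (hφ : ∀ z w : F, φ (z + w) = φ z + φ w)
    (hψ : ∀ z w : F, ψ (z + w) = ψ z + ψ w)
    (horth : ∀ z w : F, inner (𝕜 := A) (φ z) (ψ w) = 0)
    (heq : ∀ z w : F,
      a * inner (𝕜 := A) (φ z) (φ w) * star a
        = (1 - a) * inner (𝕜 := A) (ψ z) (ψ w) * star (1 - a))
    (f : E → G) (hf : OrthAJensen a f) (heven : ∀ x : E, f (-x) = f x) (hf0 : f 0 = 0) :
    ∀ x y : F,
      f (φ x + φ y) + f (φ x - φ y) = 2 • f (φ x) + 2 • f (φ y) ∧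
      f (ψ x + ψ y) + f (ψ x - ψ y) = 2 • f (ψ x) + 2 • f (ψ y) := by
  have hadd : ∀ x y : E, ⟪x, y⟫_A = 0 → f (x + y) = f x + f y :=
    fun _ _ => hf.map_add_of_inner_eq_zero hf0
  have hhalf : ∀ u : F, ∃ v, v + v = u :=
    fun u => ⟨(2⁻¹ : ℂ) • u, by rw [← add_smul]; norm_num⟩
  have hψφ : ∀ z w : F, ⟪ψ z, φ w⟫_A = 0 :=
    fun z w => RightCStarModule.inner_eq_zero_comm.1 (horth w z)
  intro x y
  exact ⟨map_parallelogram_of_conj_inner_eq hadd heven hf0 hhalf (.mk' φ hφ) (.mk' ψ hψ) horth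
      a (1 - a) heq x y,
    map_parallelogram_of_conj_inner_eq hadd heven hf0 hhalf (.mk' ψ hψ) (.mk' φ hφ) hψφ
      (1 - a) a (fun z w => (heq z w).symm) x y⟩
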